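/- arXiv:1912.03774 — 2 statements merged into one kernel-verified Lean document; each statement's English description precedes it below -/
import Mathlib

section
/- Let $(G,\prec)$ be an ordered groupoid. Every filter $A\subseteq G$ (a down-directed set with $A^\prec\subseteq A$ and $a,b\in A\Rightarrow\exists c\in A,\ c\prec a,b$) is a coset, i.e. a unit-directed set with $AA^{-1}A\subseteq A$ and $A^\prec\subseteq A$. -/
/-- An algebraic groupoid: a type with a partially-defined multiplication
(given by a totalised operation `mul` together with a definedness predicate
`D`) and an inversion, satisfying the usual groupoid axioms.  Here
`p` and `q` are composable iff `s(p) = r(q)`, i.e. `p⁻¹p = qq⁻¹`. -/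
structure AlgGroupoid (G : Type*) where
  mul : G → G → G
  inv : G → G
  D : G → G → Prop
  D_iff : ∀ p q, D p q ↔ mul (inv p) p = mul q (inv q)
  inv_inv : ∀ p, inv (inv p) = p
  assoc : ∀ p q r, D p q → D q r → mul (mul p q) r = mul p (mul q r)
  D_mul_left : ∀ p q r, D p q → D q r → D (mul p q) r
  D_mul_right : ∀ p q r, D p q → D q r → D p (mul q r)
  mul_inv_mul : ∀ p q, D p q → mul (mul p q) (inv q) = p
  inv_mul_mul : ∀ p q, D p q → mul (inv p) (mul p q) = q

variable {G : Type*}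

/-- The source `s(g) = g⁻¹g`. -/
def AlgGroupoid.src (Γ : AlgGroupoid G) (g : G) : G := Γ.mul (Γ.inv g) g

/-- The range `r(g) = gg⁻¹`. -/
def AlgGroupoid.rng (Γ : AlgGroupoid G) (g : G) : G := Γ.mul g (Γ.inv g)

/-- `(G, ≺)` is an ordered groupoid: `≺` is transitive, preserves products and
inverses, and every `r ≺ pp⁻¹` is of the form `qq⁻¹` for some `q ≺ p`. -/
def IsOrderedGroupoid (Γ : AlgGroupoid G) (prec : G → G → Prop) : Prop :=
  Transitive prec ∧
  (∀ p p' q q' : G, prec p' p → prec q' q → Γ.D p q → Γ.D p' q' →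
    prec (Γ.mul p' q') (Γ.mul p q)) ∧
  (∀ p q : G, prec q p → prec (Γ.inv q) (Γ.inv p)) ∧
  (∀ p r : G, prec r (Γ.rng p) → ∃ q, prec q p ∧ r = Γ.rng q)

/-- `p^≻`: the set of elements strictly below `p`. -/
def dnSet (prec : G → G → Prop) (p : G) : Set G := {q | prec q p}

/-- `Q^≻`: the set of elements below some element of `Q`. -/
def blwSet (prec : G → G → Prop) (Q : Set G) : Set G := {p | ∃ q ∈ Q, prec p q}

/-- `Q^≺`: the set of elements above some element of `Q`. -/
def abvSet (prec : G → G → Prop) (Q : Set G) : Set G := {p | ∃ q ∈ Q, prec q p}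

/-- `Q ≺ R` as subsets. -/
def refines (prec : G → G → Prop) (Q R : Set G) : Prop := ∀ q ∈ Q, ∃ r ∈ R, prec q r

/-- Dense cover relation `Q D R`. -/
def dCov (prec : G → G → Prop) (Q R : Set G) : Prop :=
  ∀ q ∈ blwSet prec Q, ∃ r ∈ blwSet prec R, prec r q

/-- Compact cover relation `Q C R`. -/
def cCov (prec : G → G → Prop) (Q R : Set G) : Prop :=
  ∃ F : Finset G, dCov prec Q ↑F ∧ refines prec ↑F R

/-- The product of two subsets of a groupoid (restricted to defined products). -/
def setMul (Γ : AlgGroupoid G) (A B : Set G) : Set G :=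
  {g | ∃ a ∈ A, ∃ b ∈ B, Γ.D a b ∧ g = Γ.mul a b}

/-- The inverse of a subset of a groupoid. -/
def setInv (Γ : AlgGroupoid G) (A : Set G) : Set G := Γ.inv '' A

/-- `A` is unit-directed: `r[A]` and `s[A]` are down-directed, and `A` is
closed under the restrictions `a|ₛ₍b₎` and `ᵣ₍b₎|a` for `a, b ∈ A`. -/
def UnitDirected (Γ : AlgGroupoid G) (prec : G → G → Prop) (A : Set G) : Prop :=
  (∀ a ∈ A, ∀ b ∈ A, ∃ c ∈ A, prec (Γ.rng c) (Γ.rng a) ∧ prec (Γ.rng c) (Γ.rng b)) ∧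
  (∀ a ∈ A, ∀ b ∈ A, ∃ c ∈ A, prec (Γ.src c) (Γ.src a) ∧ prec (Γ.src c) (Γ.src b)) ∧
  (∀ a ∈ A, ∀ b ∈ A, ∀ q, prec q a → Γ.src q = Γ.src b → q ∈ A) ∧
  (∀ a ∈ A, ∀ b ∈ A, ∀ q, prec q a → Γ.rng q = Γ.rng b → q ∈ A)

/-- An atlas: a unit-directed set with `A A⁻¹ A ⊆ A`. -/
def IsAtlas (Γ : AlgGroupoid G) (prec : G → G → Prop) (A : Set G) : Prop :=
  UnitDirected Γ prec A ∧ setMul Γ (setMul Γ A (setInv Γ A)) A ⊆ A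

/-- A coset: an atlas with `A^≺ ⊆ A`. -/
def IsCoset (Γ : AlgGroupoid G) (prec : G → G → Prop) (A : Set G) : Prop :=
  IsAtlas Γ prec A ∧ abvSet prec A ⊆ A

section Helpers

variable (Γ : AlgGroupoid G)

lemma AG.dis (g : G) : Γ.D g (Γ.inv g) := by rw [Γ.D_iff, Γ.inv_inv]

lemma AG.dsi (g : G) : Γ.D (Γ.inv g) g := by rw [Γ.D_iff, Γ.inv_inv]

lemma AG.rng_mul_left (g : G) : Γ.mul (Γ.mul g (Γ.inv g)) g = g := by
  have h := Γ.mul_inv_mul g (Γ.inv g) (AG.dis Γ g)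
  rwa [Γ.inv_inv] at h

lemma AG.mul_src (g : G) : Γ.mul g (Γ.mul (Γ.inv g) g) = g := by
  have h := Γ.assoc g (Γ.inv g) g (AG.dis Γ g) (AG.dsi Γ g)
  rw [AG.rng_mul_left Γ g] at h
  exact h.symm

lemma AG.D_right {p q : G} (h : Γ.D p q) : Γ.D (Γ.inv p) (Γ.mul p q) :=
  Γ.D_mul_right (Γ.inv p) p q (AG.dsi Γ p) h

lemma AG.D_left {p q : G} (h : Γ.D p q) : Γ.D (Γ.mul p q) (Γ.inv q) :=
  Γ.D_mul_left p q (Γ.inv q) h (AG.dis Γ q)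

lemma AG.rng_mul {p q : G} (h : Γ.D p q) :
    Γ.mul (Γ.mul p q) (Γ.inv (Γ.mul p q)) = Γ.mul p (Γ.inv p) := by
  have h1 : Γ.mul (Γ.inv p) (Γ.mul p q) = q := Γ.inv_mul_mul p q h
  have hd1 : Γ.D (Γ.inv p) (Γ.mul p q) := AG.D_right Γ h
  have h2 := Γ.assoc p (Γ.inv p) (Γ.mul p q) (AG.dis Γ p) hd1
  rw [h1] at h2
  -- h2 : (p p⁻¹)(pq) = p q
  have hd2 : Γ.D (Γ.mul p (Γ.inv p)) (Γ.mul p q) :=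
    Γ.D_mul_left p (Γ.inv p) (Γ.mul p q) (AG.dis Γ p) hd1
  have h3 := Γ.mul_inv_mul (Γ.mul p (Γ.inv p)) (Γ.mul p q) hd2
  rw [h2] at h3
  exact h3

lemma AG.D_inv_inv {p q : G} (h : Γ.D p q) : Γ.D (Γ.inv q) (Γ.inv p) := by
  rw [Γ.D_iff] at h ⊢
  rw [Γ.inv_inv, Γ.inv_inv]
  exact h.symm

lemma AG.inv_mul {p q : G} (h : Γ.D p q) :
    Γ.inv (Γ.mul p q) = Γ.mul (Γ.inv q) (Γ.inv p) := by
  set m := Γ.mul p q with hm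
  have h1 : Γ.mul m (Γ.inv q) = p := Γ.mul_inv_mul p q h
  have hd : Γ.D m (Γ.inv q) := AG.D_left Γ h
  have h2 := Γ.inv_mul_mul m (Γ.inv q) hd
  rw [h1] at h2
  -- h2 : m⁻¹ p = q⁻¹
  have hdm : Γ.D (Γ.inv m) p := by
    rw [Γ.D_iff, Γ.inv_inv]
    exact AG.rng_mul Γ h
  have h3 := Γ.assoc (Γ.inv m) p (Γ.inv p) hdm (AG.dis Γ p)
  rw [h2] at h3
  -- h3 : q⁻¹ p⁻¹ = m⁻¹ (p p⁻¹)
  rw [← AG.rng_mul Γ h] at h3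
  have h4 : Γ.mul (Γ.inv m) (Γ.mul m (Γ.inv m)) = Γ.inv m := by
    have := AG.mul_src Γ (Γ.inv m)
    rwa [Γ.inv_inv] at this
  rw [h4] at h3
  exact h3.symm

lemma AG.src_mul {p q : G} (h : Γ.D p q) :
    Γ.mul (Γ.inv (Γ.mul p q)) (Γ.mul p q) = Γ.mul (Γ.inv q) q := by
  have hD' : Γ.D (Γ.inv q) (Γ.inv p) := AG.D_inv_inv Γ h
  have h1 := AG.rng_mul Γ hD'
  rw [← AG.inv_mul Γ h] at h1
  rw [Γ.inv_inv, Γ.inv_inv] at h1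
  exact h1

variable {prec : G → G → Prop}

lemma AG.prec_rng (h : IsOrderedGroupoid Γ prec) {c a : G} (hca : prec c a) :
    prec (Γ.mul c (Γ.inv c)) (Γ.mul a (Γ.inv a)) :=
  h.2.1 a c (Γ.inv a) (Γ.inv c) hca (h.2.2.1 a c hca) (AG.dis Γ a) (AG.dis Γ c)

lemma AG.prec_src (h : IsOrderedGroupoid Γ prec) {c a : G} (hca : prec c a) :
    prec (Γ.mul (Γ.inv c) c) (Γ.mul (Γ.inv a) a) :=
  h.2.1 (Γ.inv a) (Γ.inv c) a c (h.2.2.1 a c hca) hca (AG.dsi Γ a) (AG.dsi Γ c)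

lemma AG.res_rng (h : IsOrderedGroupoid Γ prec) {p r : G}
    (hr : prec r (Γ.mul p (Γ.inv p))) :
    ∃ q, prec q p ∧ r = Γ.mul q (Γ.inv q) :=
  h.2.2.2 p r hr

lemma AG.res_src (h : IsOrderedGroupoid Γ prec) {p r : G}
    (hr : prec r (Γ.mul (Γ.inv p) p)) :
    ∃ q, prec q p ∧ r = Γ.mul (Γ.inv q) q := by
  have hr' : prec r (Γ.rng (Γ.inv p)) := by
    show prec r (Γ.mul (Γ.inv p) (Γ.inv (Γ.inv p)))
    rwa [Γ.inv_inv]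
  obtain ⟨u, hu, hue⟩ := h.2.2.2 (Γ.inv p) r hr'
  refine ⟨Γ.inv u, ?_, ?_⟩
  · have := h.2.2.1 (Γ.inv p) u hu
    rwa [Γ.inv_inv] at this
  · rw [Γ.inv_inv]
    exact hue

lemma AG.uniq_src (h : IsOrderedGroupoid Γ prec) {x y a : G}
    (hx : prec x a) (hy : prec y a)
    (hsrc : Γ.mul (Γ.inv x) x = Γ.mul (Γ.inv y) y) : x = y := by
  have hD : Γ.D x (Γ.inv y) := by
    rw [Γ.D_iff, Γ.inv_inv]
    exact hsrc
  set u := Γ.mul x (Γ.inv y) with hu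
  have hprec : prec u (Γ.mul a (Γ.inv a)) :=
    h.2.1 a x (Γ.inv a) (Γ.inv y) hx (h.2.2.1 a y hy) (AG.dis Γ a) hD
  obtain ⟨w, _, hwe⟩ := AG.res_rng Γ h hprec
  -- u = rng w, hence rng u = u and src u = u
  have hru : Γ.mul u (Γ.inv u) = u := by
    rw [hwe]
    exact AG.rng_mul Γ (AG.dis Γ w)
  have hsu : Γ.mul (Γ.inv u) u = u := by
    rw [hwe]
    have h1 := AG.src_mul Γ (AG.dis Γ w)
    rw [Γ.inv_inv] at h1
    exact h1
  -- rng x = u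
  have hrx : Γ.mul x (Γ.inv x) = u := by
    have := AG.rng_mul Γ hD
    rw [hru] at this
    exact this.symm
  -- rng y = u
  have hry : Γ.mul y (Γ.inv y) = u := by
    have h1 := AG.src_mul Γ hD
    rw [hsu, Γ.inv_inv] at h1
    exact h1.symm
  -- y = (rng y) y = u y = (x y⁻¹) y = x (y⁻¹ y) = x (src x) = x
  have h2 : Γ.mul u y = y := by
    rw [← hry]
    exact AG.rng_mul_left Γ y
  have h3 := Γ.assoc x (Γ.inv y) y hD (AG.dsi Γ y)
  rw [← hsrc] at h3
  rw [AG.mul_src Γ x] at h3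
  -- h3 : u y = x
  rw [h2] at h3
  exact h3.symm

lemma AG.uniq_rng (h : IsOrderedGroupoid Γ prec) {x y a : G}
    (hx : prec x a) (hy : prec y a)
    (hrng : Γ.mul x (Γ.inv x) = Γ.mul y (Γ.inv y)) : x = y := by
  have hx' : prec (Γ.inv x) (Γ.inv a) := h.2.2.1 a x hx
  have hy' : prec (Γ.inv y) (Γ.inv a) := h.2.2.1 a y hy
  have hsrc : Γ.mul (Γ.inv (Γ.inv x)) (Γ.inv x) = Γ.mul (Γ.inv (Γ.inv y)) (Γ.inv y) := by
    rw [Γ.inv_inv, Γ.inv_inv]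
    exact hrng
  have := AG.uniq_src Γ h hx' hy' hsrc
  calc x = Γ.inv (Γ.inv x) := (Γ.inv_inv x).symm
    _ = Γ.inv (Γ.inv y) := by rw [this]
    _ = y := Γ.inv_inv y

end Helpers

/-- In an ordered groupoid, every filter (down-directed up-set)
is a coset. -/
theorem filter_coset (Γ : AlgGroupoid G) (prec : G → G → Prop)
    (h : IsOrderedGroupoid Γ prec) (A : Set G)
    (hup : abvSet prec A ⊆ A)
    (hdir : ∀ a ∈ A, ∀ b ∈ A, ∃ c ∈ A, prec c a ∧ prec c b) :
    IsCoset Γ prec A := by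
  obtain ⟨htr, hmulp, hinvp, hres⟩ := id h
  have hdir3 : ∀ a ∈ A, ∀ b ∈ A, ∀ c ∈ A, ∃ d ∈ A, prec d a ∧ prec d b ∧ prec d c := by
    intro a ha b hb c hc
    obtain ⟨e, he, hea, heb⟩ := hdir a ha b hb
    obtain ⟨d, hd, hde, hdc⟩ := hdir e he c hc
    exact ⟨d, hd, htr hde hea, htr hde heb, hdc⟩
  refine ⟨⟨⟨?_, ?_, ?_, ?_⟩, ?_⟩, hup⟩
  · intro a ha b hb
    obtain ⟨c, hc, hca, hcb⟩ := hdir a ha b hb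
    exact ⟨c, hc, AG.prec_rng Γ h hca, AG.prec_rng Γ h hcb⟩
  · intro a ha b hb
    obtain ⟨c, hc, hca, hcb⟩ := hdir a ha b hb
    exact ⟨c, hc, AG.prec_src Γ h hca, AG.prec_src Γ h hcb⟩
  · -- closure under source restrictions
    intro a ha b hb q hq hsq
    obtain ⟨c, hc, hca, hcb⟩ := hdir a ha b hb
    have hsq' : Γ.mul (Γ.inv q) q = Γ.mul (Γ.inv b) b := hsq
    have hsc : prec (Γ.mul (Γ.inv c) c) (Γ.mul (Γ.inv q) q) := by
      rw [hsq']
      exact AG.prec_src Γ h hcb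
    obtain ⟨d, hdq, hde⟩ := AG.res_src Γ h hsc
    have hcd : c = d := AG.uniq_src Γ h hca (htr hdq hq) hde
    exact hup ⟨c, hc, hcd ▸ hdq⟩
  · -- closure under range restrictions
    intro a ha b hb q hq hrq
    obtain ⟨c, hc, hca, hcb⟩ := hdir a ha b hb
    have hrq' : Γ.mul q (Γ.inv q) = Γ.mul b (Γ.inv b) := hrq
    have hrc : prec (Γ.mul c (Γ.inv c)) (Γ.mul q (Γ.inv q)) := by
      rw [hrq']
      exact AG.prec_rng Γ h hcb
    obtain ⟨d, hdq, hde⟩ := AG.res_rng Γ h hrc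
    have hcd : c = d := AG.uniq_rng Γ h hca (htr hdq hq) hde
    exact hup ⟨c, hc, hcd ▸ hdq⟩
  · -- A A⁻¹ A ⊆ A
    rintro g ⟨x, ⟨a, ha, b', ⟨b, hb, rfl⟩, hDab, rfl⟩, c, hc, hDx, rfl⟩
    obtain ⟨d, hd, hda, hdb, hdc⟩ := hdir3 a ha b hb c hc
    have h1 : prec (Γ.mul d (Γ.inv d)) (Γ.mul a (Γ.inv b)) :=
      hmulp a d (Γ.inv b) (Γ.inv d) hda (hinvp b d hdb) hDab (AG.dis Γ d)
    have hDdd : Γ.D (Γ.mul d (Γ.inv d)) d :=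
      Γ.D_mul_left d (Γ.inv d) d (AG.dis Γ d) (AG.dsi Γ d)
    have h2 : prec (Γ.mul (Γ.mul d (Γ.inv d)) d) (Γ.mul (Γ.mul a (Γ.inv b)) c) :=
      hmulp (Γ.mul a (Γ.inv b)) (Γ.mul d (Γ.inv d)) c d h1 hdc hDx hDdd
    rw [AG.rng_mul_left Γ d] at h2
    exact hup ⟨d, hd, h2⟩
end

section
/- Let $(G,\prec)$ be an ordered groupoid and let $A,B\subseteq G$ be non-empty cosets with $(A^{-1}A)^\prec=(BB^{-1})^\prec$. Then for any $b\in B$: $\emptyset\neq Ab^\succ\subseteq AB\subseteq(Ab^\succ)^\prec$, where $Ab^\succ=\{ac:a\in A,\ c\prec b,\ ac\text{ defined}\}$ and $AB=\{ac:a\in A,\ c\in B,\ ac\text{ defined}\}$. -/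
variable {G : Type*}

namespace AlgGroupoid

variable (Γ : AlgGroupoid G)

lemma D_self_inv (p : G) : Γ.D p (Γ.inv p) := by
  rw [Γ.D_iff, Γ.inv_inv]

lemma D_inv_self (p : G) : Γ.D (Γ.inv p) p := by
  rw [Γ.D_iff, Γ.inv_inv]

lemma src_inv (p : G) : Γ.src (Γ.inv p) = Γ.rng p := by
  unfold src rng; rw [Γ.inv_inv]

lemma rng_inv (p : G) : Γ.rng (Γ.inv p) = Γ.src p := by
  unfold rng src; rw [Γ.inv_inv]

lemma mul_src (g : G) : Γ.mul g (Γ.src g) = g := by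
  have := Γ.inv_mul_mul (Γ.inv g) g (Γ.D_inv_self g)
  rwa [Γ.inv_inv] at this

lemma rng_mul {p q : G} (h : Γ.D p q) : Γ.rng (Γ.mul p q) = Γ.rng p := by
  have hDm : Γ.D (Γ.inv p) (Γ.mul p q) :=
    Γ.D_mul_right _ _ _ (Γ.D_inv_self p) h
  have hRm : Γ.D (Γ.rng p) (Γ.mul p q) :=
    Γ.D_mul_left p (Γ.inv p) (Γ.mul p q) (Γ.D_self_inv p) hDm
  have h2 : Γ.mul (Γ.rng p) (Γ.mul p q) = Γ.mul p q := by
    show Γ.mul (Γ.mul p (Γ.inv p)) (Γ.mul p q) = Γ.mul p q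
    rw [Γ.assoc p (Γ.inv p) (Γ.mul p q) (Γ.D_self_inv p) hDm,
      Γ.inv_mul_mul p q h]
  have h3 := Γ.mul_inv_mul (Γ.rng p) (Γ.mul p q) hRm
  rw [h2] at h3
  exact h3

lemma src_mul {p q : G} (h : Γ.D p q) : Γ.src (Γ.mul p q) = Γ.src q := by
  have hq : Γ.D q (Γ.src q) :=
    Γ.D_mul_right q (Γ.inv q) q (Γ.D_self_inv q) (Γ.D_inv_self q)
  have hm : Γ.D (Γ.mul p q) (Γ.src q) := Γ.D_mul_left p q _ h hq
  have h2 : Γ.mul (Γ.mul p q) (Γ.src q) = Γ.mul p q := by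
    rw [Γ.assoc p q _ h hq, Γ.mul_src q]
  have h3 := Γ.inv_mul_mul (Γ.mul p q) (Γ.src q) hm
  rw [h2] at h3
  exact h3

lemma src_rng (p : G) : Γ.src (Γ.rng p) = Γ.rng p := by
  show Γ.src (Γ.mul p (Γ.inv p)) = _
  rw [Γ.src_mul (Γ.D_self_inv p), Γ.src_inv]

lemma rng_src (p : G) : Γ.rng (Γ.src p) = Γ.src p := by
  show Γ.rng (Γ.mul (Γ.inv p) p) = _
  rw [Γ.rng_mul (Γ.D_inv_self p), Γ.rng_inv]

lemma D_of_eq {p q : G} (h : Γ.src p = Γ.rng q) : Γ.D p q :=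
  (Γ.D_iff p q).mpr h

lemma eq_of_D {p q : G} (h : Γ.D p q) : Γ.src p = Γ.rng q :=
  (Γ.D_iff p q).mp h

end AlgGroupoid

/-- For non-empty cosets `A, B` with `(A⁻¹A)^≺ = (BB⁻¹)^≺` and
`b ∈ B`, one has `∅ ≠ A b^≻ ⊆ AB ⊆ (A b^≻)^≺`. -/
theorem coset_products (Γ : AlgGroupoid G) (prec : G → G → Prop)
    (h : IsOrderedGroupoid Γ prec) (A B : Set G)
    (hA : IsCoset Γ prec A) (hB : IsCoset Γ prec B)
    (hAne : A.Nonempty) (hBne : B.Nonempty)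
    (heq : abvSet prec (setMul Γ (setInv Γ A) A) = abvSet prec (setMul Γ B (setInv Γ B)))
    (b : G) (hb : b ∈ B) :
    (setMul Γ A (dnSet prec b)).Nonempty ∧
    setMul Γ A (dnSet prec b) ⊆ setMul Γ A B ∧
    setMul Γ A B ⊆ abvSet prec (setMul Γ A (dnSet prec b)) := by
  obtain ⟨htrans, hmul, hinv, hres⟩ := h
  obtain ⟨⟨⟨hArd, hAsd, hAsrc, hArng⟩, hAmul⟩, hAup⟩ := hA
  obtain ⟨⟨⟨hBrd, hBsd, hBsrc, hBrng⟩, hBmul⟩, hBup⟩ := hB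
  -- order preserves ranges and sources
  have prec_rng : ∀ {q p : G}, prec q p → prec (Γ.rng q) (Γ.rng p) := by
    intro q p hqp
    exact hmul p q (Γ.inv p) (Γ.inv q) hqp (hinv p q hqp)
      (Γ.D_self_inv p) (Γ.D_self_inv q)
  have prec_src : ∀ {q p : G}, prec q p → prec (Γ.src q) (Γ.src p) := by
    intro q p hqp
    exact hmul (Γ.inv p) (Γ.inv q) p q (hinv p q hqp) hqp
      (Γ.D_inv_self p) (Γ.D_inv_self q)
  -- restriction on the source side
  have src_restrict : ∀ p u, prec u (Γ.src p) →
      ∃ q, prec q p ∧ Γ.src q = u := by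
    intro p u hu
    rw [← Γ.rng_inv] at hu
    obtain ⟨q, hq, hqr⟩ := hres (Γ.inv p) u hu
    refine ⟨Γ.inv q, ?_, ?_⟩
    · have := hinv _ _ hq
      rwa [Γ.inv_inv] at this
    · rw [Γ.src_inv]; exact hqr.symm
  -- every range of an element of `B` dominates something in `B B⁻¹`
  have rngB_mem : ∀ b' ∈ B, Γ.rng b' ∈
      abvSet prec (setMul Γ B (setInv Γ B)) := by
    intro b' hb'
    obtain ⟨b₆, hb₆, h6, -⟩ := hBrd b' hb' b' hb'
    exact ⟨Γ.rng b₆, ⟨b₆, hb₆, Γ.inv b₆, ⟨b₆, hb₆, rfl⟩,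
      Γ.D_self_inv b₆, rfl⟩, h6⟩
  -- every source of an element of `A` dominates something in `A⁻¹ A`
  have srcA_mem : ∀ a ∈ A, Γ.src a ∈
      abvSet prec (setMul Γ (setInv Γ A) A) := by
    intro a ha
    obtain ⟨a₅, ha₅, h5, -⟩ := hAsd a ha a ha
    exact ⟨Γ.src a₅, ⟨Γ.inv a₅, ⟨a₅, ha₅, rfl⟩, a₅, ha₅,
      Γ.D_inv_self a₅, rfl⟩, h5⟩
  -- PART 1 : nonemptiness
  have part1 : (setMul Γ A (dnSet prec b)).Nonempty := by
    obtain ⟨y, hy, hyb⟩ : Γ.rng b ∈ abvSet prec (setMul Γ (setInv Γ A) A) := by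
      rw [heq]; exact rngB_mem b hb
    obtain ⟨x, ⟨a₂, ha₂, rfl⟩, a₃, ha₃, hd, rfl⟩ := hy
    have hsrc : prec (Γ.src a₃) (Γ.rng b) := by
      have h1 := prec_src hyb
      rw [Γ.src_mul hd] at h1
      rwa [Γ.src_rng] at h1
    obtain ⟨c, hcb, hcr⟩ := hres b (Γ.src a₃) hsrc
    exact ⟨Γ.mul a₃ c, a₃, ha₃, c, hcb, Γ.D_of_eq hcr, rfl⟩
  refine ⟨part1, ?_, ?_⟩
  -- PART 2 : `A b^≻ ⊆ A B`
  · rintro g ⟨a, ha, c, hcb, hD, rfl⟩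
    refine ⟨a, ha, c, ?_, hD, rfl⟩
    -- show `c ∈ B`
    obtain ⟨w, hw, hws⟩ : Γ.src a ∈ abvSet prec (setMul Γ B (setInv Γ B)) := by
      rw [← heq]; exact srcA_mem a ha
    obtain ⟨b₁, hb₁, x, ⟨b₂, hb₂, rfl⟩, hdw, rfl⟩ := hw
    have h1 : prec (Γ.rng b₁) (Γ.src a) := by
      have h2 := prec_rng hws
      rw [Γ.rng_mul hdw] at h2
      rwa [Γ.rng_src] at h2
    rw [Γ.eq_of_D hD] at h1
    obtain ⟨c₁, hc₁c, hc₁r⟩ := hres c (Γ.rng b₁) h1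
    have hc₁B : c₁ ∈ B := hBrng b hb b₁ hb₁ c₁ (htrans hc₁c hcb) hc₁r.symm
    exact hBup ⟨c₁, hc₁B, hc₁c⟩
  -- PART 3 : `A B ⊆ (A b^≻)^≺`
  · rintro g ⟨a, ha, b', hb', hD, rfl⟩
    -- common source restriction of `b` and `b'`
    obtain ⟨b₅, hb₅, hub, hub'⟩ := hBsd b hb b' hb'
    obtain ⟨c, hcb, hcsrc⟩ := src_restrict b (Γ.src b₅) hub
    obtain ⟨c', hc'b', hc'src⟩ := src_restrict b' (Γ.src b₅) hub'
    have hcB : c ∈ B := hBsrc b hb b₅ hb₅ c hcb hcsrc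
    have hc'B : c' ∈ B := hBsrc b' hb' b₅ hb₅ c' hc'b' hc'src
    have Dk : Γ.D c' (Γ.inv c) := by
      refine Γ.D_of_eq ?_
      rw [Γ.rng_inv]; rw [hc'src, hcsrc]
    -- something in `B B⁻¹` strictly below `k = c' c⁻¹`
    obtain ⟨b₇, hb₇, hdc, hd'c'⟩ := hBsd c hcB c' hc'B
    obtain ⟨d, hdltc, hdsrc⟩ := src_restrict c (Γ.src b₇) hdc
    obtain ⟨d', hd'ltc', hd'src⟩ := src_restrict c' (Γ.src b₇) hd'c'
    have Dx : Γ.D d' (Γ.inv d) := by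
      refine Γ.D_of_eq ?_
      rw [Γ.rng_inv, hd'src, hdsrc]
    have hxk : prec (Γ.mul d' (Γ.inv d)) (Γ.mul c' (Γ.inv c)) :=
      hmul c' d' (Γ.inv c) (Γ.inv d) hd'ltc' (hinv _ _ hdltc) Dk Dx
    obtain ⟨v, hv, hvk⟩ : Γ.mul c' (Γ.inv c) ∈
        abvSet prec (setMul Γ (setInv Γ A) A) := by
      rw [heq]
      exact ⟨Γ.mul d' (Γ.inv d), ⟨d', hBsrc c' hc'B b₇ hb₇ d' hd'ltc' hd'src,
        Γ.inv d, ⟨d, hBsrc c hcB b₇ hb₇ d hdltc hdsrc, rfl⟩, Dx, rfl⟩, hxk⟩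
    obtain ⟨x, ⟨a₂, ha₂, rfl⟩, a₃, ha₃, hva, rfl⟩ := hv
    set v := Γ.mul (Γ.inv a₂) a₃ with hvdef
    have hrv : Γ.rng v = Γ.src a₂ := by rw [Γ.rng_mul hva, Γ.rng_inv]
    have hsv : Γ.src v = Γ.src a₃ := Γ.src_mul hva
    have hrk : Γ.rng (Γ.mul c' (Γ.inv c)) = Γ.rng c' := Γ.rng_mul Dk
    have hsk : Γ.src (Γ.mul c' (Γ.inv c)) = Γ.rng c := by
      rw [Γ.src_mul Dk, Γ.src_inv]
    -- `src a₂ ≺ src a`, restrict `a`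
    have h8 : prec (Γ.src a₂) (Γ.src a) := by
      have h81 := prec_rng hvk
      rw [hrv, hrk] at h81
      have h82 := prec_rng hc'b'
      have h83 : Γ.src a = Γ.rng b' := Γ.eq_of_D hD
      rw [h83]
      exact htrans h81 h82
    obtain ⟨a', ha'a, hsa'⟩ := src_restrict a (Γ.src a₂) h8
    have ha' : a' ∈ A := hAsrc a ha a₂ ha₂ a' ha'a hsa'
    have Da'v : Γ.D a' v := Γ.D_of_eq (by rw [hsa', hrv])
    have Da'a₂ : Γ.D a' (Γ.inv a₂) := Γ.D_of_eq (by rw [hsa', Γ.rng_inv])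
    -- `a₁ = a' v ∈ A`
    have ha₁ : Γ.mul a' v ∈ A := by
      have hmem : Γ.mul (Γ.mul a' (Γ.inv a₂)) a₃ ∈ A :=
        hAmul ⟨Γ.mul a' (Γ.inv a₂), ⟨a', ha', Γ.inv a₂, ⟨a₂, ha₂, rfl⟩,
          Da'a₂, rfl⟩, a₃, ha₃,
          Γ.D_mul_left a' (Γ.inv a₂) a₃ Da'a₂ hva, rfl⟩
      rwa [Γ.assoc a' (Γ.inv a₂) a₃ Da'a₂ hva] at hmem
    have hsa₁ : Γ.src (Γ.mul a' v) = Γ.src a₃ := by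
      rw [Γ.src_mul Da'v, hsv]
    -- restrict `c` to get `c₀ ≺ c ≺ b` with `rng c₀ = src a₃`
    have h13 : prec (Γ.src a₃) (Γ.rng c) := by
      have h131 := prec_src hvk
      rw [hsv, hsk] at h131
      exact h131
    obtain ⟨c₀, hc₀c, hc₀⟩ := hres c (Γ.src a₃) h13
    have hc₀b : prec c₀ b := htrans hc₀c hcb
    have Da₁c₀ : Γ.D (Γ.mul a' v) c₀ := Γ.D_of_eq (by rw [hsa₁, hc₀])
    have Dvc₀ : Γ.D v c₀ := Γ.D_of_eq (by rw [hsv, hc₀])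
    refine ⟨Γ.mul (Γ.mul a' v) c₀, ⟨Γ.mul a' v, ha₁, c₀, hc₀b, Da₁c₀, rfl⟩, ?_⟩
    -- show `(a' v) c₀ ≺ a b'`
    have Dkc : Γ.D (Γ.mul c' (Γ.inv c)) c := Γ.D_of_eq hsk
    have hkc : Γ.mul (Γ.mul c' (Γ.inv c)) c = c' := by
      rw [Γ.assoc c' (Γ.inv c) c Dk (Γ.D_inv_self c)]
      show Γ.mul c' (Γ.src c) = c'
      rw [hcsrc, ← hc'src, Γ.mul_src]
    have h20 : prec (Γ.mul v c₀) c' := by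
      have := hmul (Γ.mul c' (Γ.inv c)) v c c₀ hvk hc₀c Dkc Dvc₀
      rwa [hkc] at this
    have h21 : prec (Γ.mul v c₀) b' := htrans h20 hc'b'
    have Davc : Γ.D a' (Γ.mul v c₀) :=
      Γ.D_of_eq (by rw [hsa', Γ.rng_mul Dvc₀, hrv])
    have h23 : prec (Γ.mul a' (Γ.mul v c₀)) (Γ.mul a b') :=
      hmul a a' b' (Γ.mul v c₀) ha'a h21 hD Davc
    rwa [Γ.assoc a' v c₀ Da'v Dvc₀]
end
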